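/- There exist cutoff stable matchings that the cutoff-decreasing algorithm cannot output under any project order: in the instance with A = {a1,a2}, P = {p1,p2} of capacity 1, one supervisor with budget 2 supervising both, preferences a1: p1,p2; a2: p2,p1; p1: a2,a1; p2: a1,a2, both project orders produce {(a2,p1),(a1,p2)}, yet {(a1,p1),(a2,p2)} is also cutoff stable. -/

import Mathlib

open Finset

/-- An instance of the two-sided matching problem: applicants `A` with strict preference
lists over acceptable projects, projects `P` with strict preference lists over
acceptable applicants (best first), and capacities. -/
structure MatchInst (A P : Type) where
  prefA : A → List P
  prefP : P → List A
  cap : P → ℕ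

variable {A P : Type} [Fintype A] [Fintype P] [DecidableEq A] [DecidableEq P]

/-- number of applicants matched to project `p` -/
def mcount (M : A → Option P) (p : P) : ℕ := (univ.filter fun a => M a = some p).card

/-- counts after adding one extra applicant to project `p` (the matching `M ∪ {(a,p)}`) -/
def addCount (M : A → Option P) (p : P) : P → ℕ :=
  fun q => mcount M q + if q = p then 1 else 0

/-- the matching `(M ∪ {(a,p)}) \ {(a, M(a))}` -/
def swap (M : A → Option P) (a : A) (p : P) : A → Option P := Function.update M a (some p)

/-- a feasibility function on (anonymous) distributions of applicants over projects,
satisfying the heredity property -/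
def Heredity (f : (P → ℕ) → Prop) : Prop :=
  f (fun _ => 0) ∧ ∀ v w : P → ℕ, (∀ p, w p ≤ v p) → f v → f w

namespace MatchInst

variable (I : MatchInst A P)

def accA (a : A) (p : P) : Prop := p ∈ I.prefA a
def accP (p : P) (a : A) : Prop := a ∈ I.prefP p
/-- rank of project `p` in applicant `a`'s list (0-indexed; lower is better) -/
def rkA (a : A) (p : P) : ℕ := (I.prefA a).idxOf p
/-- rank of applicant `a` in project `p`'s list (0-indexed; lower is better) -/
def rkP (p : P) (a : A) : ℕ := (I.prefP p).idxOf a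
/-- score of applicant `a` at project `p`: `|A| - k + 1` if `a` is ranked `k`-th, `0` if unranked -/
def score (p : P) (a : A) : ℕ :=
  if a ∈ I.prefP p then Fintype.card A - (I.prefP p).idxOf a else 0

def IsMatching (M : A → Option P) : Prop :=
  (∀ a p, M a = some p → I.accA a p ∧ I.accP p a) ∧ ∀ p, mcount M p ≤ I.cap p

/-- `a` strictly prefers project `p` to the assignment `o` (being unmatched is worst) -/
def Prefers (a : A) (p : P) (o : Option P) : Prop :=
  I.accA a p ∧ ∀ q, o = some q → I.rkA a p < I.rkA a q

/-- no justified envy -/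
def Fair (M : A → Option P) : Prop :=
  ∀ a p, M a ≠ some p → I.Prefers a p (M a) →
    ∀ a', M a' = some p → I.rkP p a' < I.rkP p a

/-- applicant `a` is admissible at project `p` under cutoffs `d` -/
def Adm (d : P → ℕ) (a : A) (p : P) : Prop :=
  I.accA a p ∧ I.accP p a ∧ d p ≤ I.score p a

/-- cutoffs `d` induce the matching `M`: every applicant is matched to her most
preferred project where she is admissible (and unmatched if there is none) -/
def Induces (d : P → ℕ) (M : A → Option P) : Prop :=
  ∀ a : A,
    (∀ p, M a = some p → I.Adm d a p ∧ ∀ q, I.Adm d a q → q ≠ p → I.rkA a p < I.rkA a q) ∧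
    (M a = none → ∀ p, ¬ I.Adm d a p)

def Blocking (M : A → Option P) (a : A) (p : P) : Prop :=
  I.Prefers a p (M a) ∧
    ((mcount M p < I.cap p ∧ I.accP p a) ∨ ∃ a', M a' = some p ∧ I.rkP p a < I.rkP p a')

def StronglyStable (f : (P → ℕ) → Prop) (M : A → Option P) : Prop :=
  I.IsMatching M ∧ f (mcount M) ∧
    ∀ a p, I.Blocking M a p →
      (∀ a', M a' = some p → I.rkP p a' < I.rkP p a) ∧ ¬ f (mcount (swap M a p))

/-- weak stability in terms of permitted blocking pairs -/
def WeaklyStableBlk (f : (P → ℕ) → Prop) (M : A → Option P) : Prop :=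
  I.IsMatching M ∧ f (mcount M) ∧
    ∀ a p, I.Blocking M a p →
      (∀ a', M a' = some p → I.rkP p a' < I.rkP p a) ∧ ¬ f (addCount M p)

def WeaklyNonWasteful (f : (P → ℕ) → Prop) (M : A → Option P) : Prop :=
  f (mcount M) ∧ ∀ a p, M a ≠ some p → I.accP p a → I.Prefers a p (M a) →
    ¬ f (addCount M p) ∨ I.cap p ≤ mcount M p

/-- weak stability as fairness plus weak non-wastefulness -/
def WeaklyStable (f : (P → ℕ) → Prop) (M : A → Option P) : Prop :=
  I.IsMatching M ∧ I.Fair M ∧ I.WeaklyNonWasteful f M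

def CutoffNonWasteful (f : (P → ℕ) → Prop) (M : A → Option P) : Prop :=
  f (mcount M) ∧ ∀ a p, M a ≠ some p → I.accP p a → I.Prefers a p (M a) →
    ¬ f (mcount (swap M a p)) ∨
    (∃ a', M a' ≠ some p ∧ I.accP p a' ∧ I.rkP p a' < I.rkP p a ∧
      I.Prefers a' p (M a') ∧ ¬ f (mcount (swap M a' p))) ∨
    I.cap p ≤ mcount M p

def CutoffStable (f : (P → ℕ) → Prop) (M : A → Option P) : Prop :=
  I.IsMatching M ∧ I.Fair M ∧ I.CutoffNonWasteful f M

/-- project `p` is unconstrained for `M`: one more applicant can be added to `p` feasibly -/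
def Unconstrained (f : (P → ℕ) → Prop) (M : A → Option P) (p : P) : Prop :=
  f (addCount M p)

/-- cutoffs after decreasing the cutoff of `p` by one -/
def decCut (d : P → ℕ) (p : P) : P → ℕ := Function.update d p (d p - 1)

/-- minimal cutoffs: no cutoff can be decreased keeping the induced matching feasible -/
def MinimalCutoffs (f : (P → ℕ) → Prop) (d : P → ℕ) : Prop :=
  ∀ p, d p = 0 ∨ ∀ M', I.Induces (decCut d p) M' → ¬ f (mcount M')

def StrictlyBetter (a : A) (o o' : Option P) : Prop :=
  ∃ p, o = some p ∧ I.accA a p ∧ ∀ q, o' = some q → I.rkA a p < I.rkA a q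

def ParetoDominates (M' M : A → Option P) : Prop :=
  (∀ a, M' a = M a ∨ I.StrictlyBetter a (M' a) (M a)) ∧
    ∃ a, I.StrictlyBetter a (M' a) (M a)

end MatchInst

section Algorithm

instance (I : MatchInst A P) (d : P → ℕ) (a : A) (p : P) : Decidable (I.Adm d a p) :=
  decidable_of_iff (p ∈ I.prefA a ∧ a ∈ I.prefP p ∧ d p ≤ I.score p a) Iff.rfl

variable [LinearOrder P]

/-- the matching induced by cutoffs `d`: each applicant goes to her most preferred
project where she is admissible -/
def MatchInst.inducedM (I : MatchInst A P) (d : P → ℕ) (a : A) : Option P :=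
  ((univ.filter fun p => I.Adm d a p).sort (· ≤ ·)).argmin fun p => I.rkA a p

/-- the cutoff of `p` can be decreased by one keeping the induced matching feasible -/
def MatchInst.DecStep (I : MatchInst A P) (f : (P → ℕ) → Prop) (d : P → ℕ) (p : P) : Prop :=
  1 ≤ d p ∧ f (mcount (I.inducedM (MatchInst.decCut d p)))

/-- one step of the cutoff-decreasing algorithm: decrement the cutoff of the first
project (w.r.t. the processing order `ord`) whose decrement keeps feasibility -/
def MatchInst.AlgStep (I : MatchInst A P) (f : (P → ℕ) → Prop) (ord : P → P → Prop)
    (d d' : P → ℕ) : Prop :=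
  ∃ p, I.DecStep f d p ∧ (∀ q, ord q p → ¬ I.DecStep f d q) ∧ d' = MatchInst.decCut d p

/-- the cutoff-decreasing algorithm outputs `M`: starting from cutoffs `|A|+1`
everywhere, a sequence of steps reaches minimal cutoffs inducing `M` -/
def MatchInst.Outputs (I : MatchInst A P) (f : (P → ℕ) → Prop) (ord : P → P → Prop)
    (M : A → Option P) : Prop :=
  ∃ d : P → ℕ, Relation.ReflTransGen (I.AlgStep f ord) (fun _ => Fintype.card A + 1) d ∧
    (∀ p, ¬ I.DecStep f d p) ∧ M = I.inducedM d

end Algorithm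

/-- the instance: `a1: p1,p2`; `a2: p2,p1`; `p1: a2,a1`; `p2: a1,a2`; capacities 1,
one supervisor of budget 2 supervising both projects -/
def I17 : MatchInst (Fin 2) (Fin 2) :=
  ⟨![[0, 1], [1, 0]], ![[1, 0], [0, 1]], fun _ => 1⟩

/-- feasibility: every capacity-respecting matching is feasible (budget 2 covers both) -/
def f17 : (Fin 2 → ℕ) → Prop := fun v => v 0 ≤ 1 ∧ v 1 ≤ 1

/-!
The scores are `score p1 a2 = score p2 a1 = 2` and `score p1 a1 = score p2 a2 = 1`. From the
initial cutoffs `(3, 3)` either cutoff may be lowered to `2`, admitting that project's favourite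
applicant; once a cutoff is `2`, lowering any cutoff to `1` sends both applicants to the same
project. Hence every run, whatever the project order, ends at cutoffs `(2, 2)`, where each
project gets its favourite applicant. In `{(a1,p1),(a2,p2)}` every applicant holds her first
choice, so there is neither envy nor waste to examine.
-/

theorem Finset.sort_filter {α : Type*} [LinearOrder α] (s : Finset α) (q : α → Prop)
    [DecidablePred q] : (s.filter q).sort (· ≤ ·) = (s.sort (· ≤ ·)).filter (q ·) :=
  (s.filter q).sortedLT_sort.eq_of_mem_iff (s.sortedLT_sort.pairwise.filter _).sortedLT
    (by simp)

namespace MatchInst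

-- `Finset.sort` does not reduce in the kernel; this form of `inducedM` can be evaluated by `decide`.
theorem inducedM_fin {n : ℕ} (I : MatchInst A (Fin n)) (d : Fin n → ℕ) :
    I.inducedM d = fun a => ((List.finRange n).filter (I.Adm d a ·)).argmin (I.rkA a) := by
  funext a
  rw [inducedM, Finset.sort_filter, Fin.sort_univ]

variable {I : MatchInst A P} {f : (P → ℕ) → Prop}

omit [Fintype P] in
theorem cutoffStable_of_forall_not_prefers {M : A → Option P} (hM : I.IsMatching M)
    (hf : f (mcount M)) (htop : ∀ a p, M a ≠ some p → ¬ I.Prefers a p (M a)) :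
    I.CutoffStable f M :=
  ⟨hM, fun a p hne hpref => absurd hpref (htop a p hne),
    hf, fun a p hne _ hpref => absurd hpref (htop a p hne)⟩

variable [LinearOrder P] {ord : P → P → Prop}

theorem algStep_of_minimal {d : P → ℕ} {p : P} (hp : I.DecStep f d p) (hmin : ∀ q, ¬ ord q p) :
    I.AlgStep f ord d (decCut d p) :=
  ⟨p, hp, fun q hq _ => hmin q hq, rfl⟩

theorem algStep_of_unique [Std.Irrefl ord] {d : P → ℕ} {p : P} (hp : I.DecStep f d p)
    (huniq : ∀ q, I.DecStep f d q → q = p) : I.AlgStep f ord d (decCut d p) :=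
  ⟨p, hp, fun q hq hdec => irrefl p (huniq q hdec ▸ hq), rfl⟩

theorem outputs_eq_of_invariant (Inv : (P → ℕ) → Prop) {M₀ M : A → Option P}
    (hstart : Inv fun _ => Fintype.card A + 1)
    (hstep : ∀ d, Inv d → ∀ p, I.DecStep f d p → Inv (decCut d p))
    (hfinal : ∀ d, Inv d → (∀ p, ¬ I.DecStep f d p) → I.inducedM d = M₀)
    (hM : I.Outputs f ord M) : M = M₀ := by
  obtain ⟨d, hrun, hterm, rfl⟩ := hM
  refine hfinal d ?_ hterm
  clear hterm
  induction hrun with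
  | refl => exact hstart
  | tail _ halg ih =>
    obtain ⟨p, hp, -, rfl⟩ := halg
    exact hstep _ ih p hp

end MatchInst

open MatchInst

theorem outputs_I17_eq {ord : Fin 2 → Fin 2 → Prop} {M : Fin 2 → Option (Fin 2)}
    (h : I17.Outputs f17 ord M) : M = ![some 1, some 0] := by
  refine outputs_eq_of_invariant (· ∈ [![3, 3], ![2, 3], ![3, 2], ![2, 2]]) (by decide) ?_ ?_ h
  all_goals
    simp only [DecStep, f17, inducedM_fin]
    decide

theorem outputs_I17 (ord : Fin 2 → Fin 2 → Prop) [IsStrictOrder (Fin 2) ord] :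
    I17.Outputs f17 ord ![some 1, some 0] := by
  obtain ⟨p, -, hp⟩ := (Finite.wellFounded_of_trans_of_irrefl ord).has_min Set.univ ⟨0, trivial⟩
  refine ⟨decCut (decCut (fun _ => 3) p) (1 - p),
    .tail (.single (algStep_of_minimal ?_ fun q hq => hp q trivial hq)) (algStep_of_unique ?_ ?_),
    ?_, ?_⟩
  all_goals
    fin_cases p
    all_goals
      simp only [DecStep, f17, inducedM_fin]
      decide

theorem outputs_I17_iff (ord : Fin 2 → Fin 2 → Prop) [IsStrictOrder (Fin 2) ord]
    (M : Fin 2 → Option (Fin 2)) : I17.Outputs f17 ord M ↔ M = ![some 1, some 0] :=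
  ⟨outputs_I17_eq, fun h => h ▸ outputs_I17 ord⟩

theorem cutoffStable_I17_firstChoices : I17.CutoffStable f17 ![some 0, some 1] := by
  refine cutoffStable_of_forall_not_prefers ?_ ?_ ?_
  · unfold IsMatching accA accP
    decide
  · unfold f17
    decide
  · unfold Prefers accA
    decide

/-- under both project orders the cutoff-decreasing algorithm outputs
`{(a2,p1),(a1,p2)}`, yet `{(a1,p1),(a2,p2)}` is also cutoff stable; so some cutoff
stable matchings cannot be produced by the algorithm under any project order. -/
theorem algorithm_misses_cutoffStable :
    (∀ M, I17.Outputs f17 (· < ·) M ↔ M = ![some 1, some 0]) ∧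
    (∀ M, I17.Outputs f17 (fun p q => q < p) M ↔ M = ![some 1, some 0]) ∧
    I17.CutoffStable f17 ![some 0, some 1] ∧
    (![some 0, some 1] : Fin 2 → Option (Fin 2)) ≠ ![some 1, some 0] :=
  ⟨outputs_I17_iff _, outputs_I17_iff _, cutoffStable_I17_firstChoices, by decide⟩
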